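/- arXiv:2511.13895 — 3 statements merged into one kernel-verified Lean document; each statement's English description precedes it below -/
import Mathlib

section
/- Let α ∈ (0,1). Let G₀ and G be Borel probability measures on ℝ with finite second moments. Let m(G) and m(G₀) denote their means, let (ℓ,u) be any pair consisting of an α/2-quantile and a (1−α/2)-quantile of G, and let (ℓ₀,u₀) be such a pair for G₀. Then ∫ [(m(G) − τ)² + S_int(ℓ,u;τ)] dG₀(τ) ≥ ∫ [(m(G₀) − τ)² + S_int(ℓ₀,u₀;τ)] dG₀(τ). -/
/-!
The interval score is `2/α` times the sum of the pinball losses `max (x - τ) 0 - q (x - τ)` of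
its endpoints at levels `α/2` and `1 - α/2`. For `Iio x₀ ⊆ s ⊆ Iic x₀`, `1_s(τ) - q` is a
subgradient at `x₀` of the convex loss `x ↦ pinballLoss q x τ`, so integrating, the excess expected
loss at `x` is at least `(x - x₀) (μ s - q)`. Taking `s = Iic x₀` when `x₀ ≤ x` and `s = Iio x₀`
when `x ≤ x₀`, the two halves of the quantile condition make this nonnegative. The quadratic part
is minimised at the mean, since `E (c - τ)² ≥ Var (c - τ) = Var τ`.
-/

open MeasureTheory Set

/-- The interval score of the interval `[ℓ, u]` at observation `τ`, at level `α`. -/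
noncomputable def Sint (α ℓ u τ : ℝ) : ℝ :=
  (u - ℓ) + (2 / α) * (ℓ - τ) * (if τ < ℓ then 1 else 0)
    + (2 / α) * (τ - u) * (if u < τ then 1 else 0)

/-- `x` is a `q`-quantile of the Borel probability measure `G` on `ℝ`. -/
def IsQuantile (G : Measure ℝ) (q x : ℝ) : Prop :=
  q ≤ (G (Iic x)).toReal ∧ 1 - q ≤ (G (Ici x)).toReal

noncomputable def pinballLoss (q x τ : ℝ) : ℝ := max (x - τ) 0 - q * (x - τ)

lemma integrable_pinballLoss {μ : Measure ℝ} [IsFiniteMeasure μ] (hμ : Integrable id μ)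
    (q x : ℝ) : Integrable (pinballLoss q x) μ :=
  have h : Integrable (fun τ => x - τ) μ := (integrable_const x).sub hμ
  h.pos_part.sub (h.const_mul q)

lemma mul_indicator_sub_le_pinballLoss_sub {q x x₀ τ : ℝ} {s : Set ℝ}
    (hIio : Iio x₀ ⊆ s) (hIic : s ⊆ Iic x₀) :
    (x - x₀) * (s.indicator 1 τ - q) ≤ pinballLoss q x τ - pinballLoss q x₀ τ := by
  unfold pinballLoss
  by_cases hτ : τ ∈ s
  · have : τ ≤ x₀ := hIic hτ
    rw [indicator_of_mem hτ, Pi.one_apply, max_eq_left (by linarith : 0 ≤ x₀ - τ)]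
    linarith [le_max_left (x - τ) 0]
  · have : x₀ ≤ τ := not_lt.1 fun h => hτ (hIio h)
    rw [indicator_of_notMem hτ, max_eq_right (by linarith : x₀ - τ ≤ 0)]
    linarith [le_max_right (x - τ) 0]

lemma mul_measureReal_sub_le_integral_pinballLoss_sub {μ : Measure ℝ} [IsProbabilityMeasure μ]
    (hμ : Integrable id μ) {q x x₀ : ℝ} {s : Set ℝ} (hs : MeasurableSet s)
    (hIio : Iio x₀ ⊆ s) (hIic : s ⊆ Iic x₀) :
    (x - x₀) * (μ.real s - q) ≤ ∫ τ, pinballLoss q x τ ∂μ - ∫ τ, pinballLoss q x₀ τ ∂μ := by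
  have hone : Integrable (s.indicator 1) μ := (integrable_const (1 : ℝ)).indicator hs
  have hind : Integrable (fun τ => (x - x₀) * (s.indicator 1 τ - q)) μ :=
    (hone.sub (integrable_const q)).const_mul _
  calc (x - x₀) * (μ.real s - q) = ∫ τ, (x - x₀) * (s.indicator 1 τ - q) ∂μ := by
        rw [integral_const_mul, integral_sub hone (integrable_const q),
          integral_indicator_one hs, integral_const, probReal_univ, one_smul]
    _ ≤ ∫ τ, (pinballLoss q x τ - pinballLoss q x₀ τ) ∂μ :=
        integral_mono hind
          ((integrable_pinballLoss hμ q x).sub (integrable_pinballLoss hμ q x₀))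
          fun τ => mul_indicator_sub_le_pinballLoss_sub hIio hIic
    _ = _ := integral_sub (integrable_pinballLoss hμ q x) (integrable_pinballLoss hμ q x₀)

lemma integral_pinballLoss_le_of_isQuantile {μ : Measure ℝ} [IsProbabilityMeasure μ]
    (hμ : Integrable id μ) {q x₀ : ℝ} (hx₀ : IsQuantile μ q x₀) (x : ℝ) :
    ∫ τ, pinballLoss q x₀ τ ∂μ ≤ ∫ τ, pinballLoss q x τ ∂μ := by
  rcases le_total x₀ x with hle | hle
  · have hIic : q ≤ μ.real (Iic x₀) := hx₀.1
    have := mul_measureReal_sub_le_integral_pinballLoss_sub (q := q) (x := x) hμ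
      measurableSet_Iic Iio_subset_Iic_self (subset_refl (Iic x₀))
    nlinarith
  · have hIio : μ.real (Iio x₀) ≤ q := by
      have : 1 - q ≤ μ.real (Ici x₀) := hx₀.2
      rw [← compl_Ici, probReal_compl_eq_one_sub measurableSet_Ici]
      linarith
    have := mul_measureReal_sub_le_integral_pinballLoss_sub (q := q) (x := x) hμ
      measurableSet_Iio (subset_refl (Iio x₀)) Iio_subset_Iic_self
    nlinarith

lemma Sint_eq_pinballLoss {α : ℝ} (hα : α ≠ 0) (ℓ u τ : ℝ) :
    Sint α ℓ u τ = 2 / α * (pinballLoss (α / 2) ℓ τ + pinballLoss (1 - α / 2) u τ) := by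
  unfold Sint pinballLoss
  split_ifs
  all_goals
    first
    | rw [max_eq_left (by linarith : 0 ≤ ℓ - τ)]
    | rw [max_eq_right (by linarith : ℓ - τ ≤ 0)]
  all_goals
    first
    | rw [max_eq_left (by linarith : 0 ≤ u - τ)]
    | rw [max_eq_right (by linarith : u - τ ≤ 0)]
  all_goals field_simp; ring

lemma integral_Sint {μ : Measure ℝ} [IsFiniteMeasure μ] (hμ : Integrable id μ) {α : ℝ}
    (hα : α ≠ 0) (ℓ u : ℝ) :
    ∫ τ, Sint α ℓ u τ ∂μ
      = 2 / α * (∫ τ, pinballLoss (α / 2) ℓ τ ∂μ + ∫ τ, pinballLoss (1 - α / 2) u τ ∂μ) := by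
  simp_rw [Sint_eq_pinballLoss hα]
  rw [integral_const_mul, integral_add (integrable_pinballLoss hμ _ ℓ)
    (integrable_pinballLoss hμ _ u)]

lemma integrable_Sint {μ : Measure ℝ} [IsFiniteMeasure μ] (hμ : Integrable id μ) {α : ℝ}
    (hα : α ≠ 0) (ℓ u : ℝ) : Integrable (Sint α ℓ u) μ := by
  simp_rw [funext (Sint_eq_pinballLoss hα ℓ u)]
  exact ((integrable_pinballLoss hμ _ ℓ).add (integrable_pinballLoss hμ _ u)).const_mul _

lemma integral_Sint_le_of_isQuantile {μ : Measure ℝ} [IsProbabilityMeasure μ]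
    (hμ : Integrable id μ) {α ℓ₀ u₀ : ℝ} (hα : 0 < α)
    (hℓ₀ : IsQuantile μ (α / 2) ℓ₀) (hu₀ : IsQuantile μ (1 - α / 2) u₀) (ℓ u : ℝ) :
    ∫ τ, Sint α ℓ₀ u₀ τ ∂μ ≤ ∫ τ, Sint α ℓ u τ ∂μ := by
  rw [integral_Sint hμ hα.ne', integral_Sint hμ hα.ne']
  exact mul_le_mul_of_nonneg_left
    (add_le_add (integral_pinballLoss_le_of_isQuantile hμ hℓ₀ ℓ)
      (integral_pinballLoss_le_of_isQuantile hμ hu₀ u)) (by positivity)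

open ProbabilityTheory in
lemma integral_mean_sub_sq_le {Ω : Type*} [MeasurableSpace Ω] {μ : Measure Ω}
    [IsProbabilityMeasure μ] {X : Ω → ℝ} (hX : AEMeasurable X μ) (c : ℝ) :
    ∫ ω, (μ[X] - X ω) ^ 2 ∂μ ≤ ∫ ω, (c - X ω) ^ 2 ∂μ :=
  calc ∫ ω, (μ[X] - X ω) ^ 2 ∂μ = Var[X; μ] := by
        rw [variance_eq_integral hX]
        congr with ω
        ring
    _ = Var[fun ω => c - X ω; μ] := (variance_const_sub hX.aestronglyMeasurable c).symm
    _ ≤ μ[(fun ω => c - X ω) ^ 2] := variance_le_expectation_sq (by fun_prop)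
    _ = ∫ ω, (c - X ω) ^ 2 ∂μ := rfl

theorem stmt0_general (α : ℝ) (hα : α ∈ Ioo (0 : ℝ) 1)
    (G₀ G : Measure ℝ) [IsProbabilityMeasure G₀]
    (hG₀ : MemLp id 2 G₀)
    (ℓ u ℓ₀ u₀ : ℝ)
    (hℓ₀ : IsQuantile G₀ (α / 2) ℓ₀) (hu₀ : IsQuantile G₀ (1 - α / 2) u₀) :
    (∫ τ, (((∫ t, t ∂G₀) - τ) ^ 2 + Sint α ℓ₀ u₀ τ) ∂G₀)
      ≤ ∫ τ, (((∫ t, t ∂G) - τ) ^ 2 + Sint α ℓ u τ) ∂G₀ := by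
  have hid : Integrable id G₀ := hG₀.integrable one_le_two
  have hsq (c : ℝ) : Integrable (fun τ => (c - τ) ^ 2) G₀ :=
    ((memLp_const c).sub hG₀).integrable_sq
  rw [integral_add (hsq _) (integrable_Sint hid hα.1.ne' ℓ₀ u₀),
    integral_add (hsq _) (integrable_Sint hid hα.1.ne' ℓ u)]
  exact add_le_add (integral_mean_sub_sq_le aemeasurable_id _)
    (integral_Sint_le_of_isQuantile hid hα.1 hℓ₀ hu₀ ℓ u)

/-- Propriety of the combined score: the expected score under the true distribution `G₀`
is minimised by reporting the mean and central quantiles of `G₀`. -/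
theorem stmt0 (α : ℝ) (hα : α ∈ Ioo (0 : ℝ) 1)
    (G₀ G : Measure ℝ) [IsProbabilityMeasure G₀] [IsProbabilityMeasure G]
    (hG₀ : MemLp id 2 G₀) (hG : MemLp id 2 G)
    (ℓ u ℓ₀ u₀ : ℝ)
    (hℓ : IsQuantile G (α / 2) ℓ) (hu : IsQuantile G (1 - α / 2) u)
    (hℓ₀ : IsQuantile G₀ (α / 2) ℓ₀) (hu₀ : IsQuantile G₀ (1 - α / 2) u₀) :
    (∫ τ, (((∫ t, t ∂G₀) - τ) ^ 2 + Sint α ℓ₀ u₀ τ) ∂G₀)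
      ≤ ∫ τ, (((∫ t, t ∂G) - τ) ^ 2 + Sint α ℓ u τ) ∂G₀ :=
  stmt0_general α hα G₀ G hG₀ ℓ u ℓ₀ u₀ hℓ₀ hu₀
end

section
/- Let α ∈ (0,1) and let G₀ be a Borel probability measure on ℝ with finite second moment whose cumulative distribution function is continuous and strictly increasing (so that its quantiles are unique). Let G be a Borel probability measure on ℝ with finite second moment, mean m(G), α/2-quantile ℓ and (1−α/2)-quantile u, and let m(G₀), ℓ₀, u₀ be the corresponding quantities for G₀. Then ∫ [(m(G) − τ)² + S_int(ℓ,u;τ)] dG₀(τ) = ∫ [(m(G₀) − τ)² + S_int(ℓ₀,u₀;τ)] dG₀(τ) holds if and only if m(G) = m(G₀), ℓ = ℓ₀ and u = u₀. -/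
/-!
Up to the factor `2 / α`, the interval score is the sum of the pinball losses
`ρ_q(x, τ) = (x - τ)⁺ - q (x - τ)` at the levels `α / 2` and `1 - α / 2`, and the squared error
splits as `(c - m₀)² + Var G₀`. Writing `F₀` for the CDF of `G₀`, Fubini applied to `1{τ ≤ t}`
gives `E ρ_q(x, ·) - E ρ_q(c, ·) = ∫_c^x (F₀ t - q) dt`, which is positive for `x ≠ c` as soon as
`F₀ c = q` and `F₀` is strictly increasing. Continuity of `F₀` forces `F₀ ℓ₀ = α / 2` and
`F₀ u₀ = 1 - α / 2`, so the expected score at `(c, ℓ, u)` exceeds its value at `(m₀, ℓ₀, u₀)` by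
three nonnegative terms, all of which vanish only at that point.
-/

open MeasureTheory Set

open Filter ProbabilityTheory

lemma measure_singleton_eq_zero_of_continuous (μ : Measure ℝ) [IsProbabilityMeasure μ]
    (hcont : Continuous fun t : ℝ => (μ (Iic t)).toReal) (x : ℝ) : μ {x} = 0 := by
  have hcdf : (cdf μ : ℝ → ℝ) = fun t => (μ (Iic t)).toReal :=
    funext fun t => by rw [cdf_eq_real, measureReal_def]
  rw [← measure_cdf μ, StieltjesFunction.measure_singleton, hcdf,
    leftLim_eq_of_tendsto (hcont.continuousAt.tendsto.mono_left nhdsWithin_le_nhds),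
    sub_self, ENNReal.ofReal_zero]

lemma IsQuantile.toReal_measure_Iic_eq {μ : Measure ℝ} [IsProbabilityMeasure μ] {q x : ℝ}
    (h : IsQuantile μ q x) (hcont : Continuous fun t : ℝ => (μ (Iic t)).toReal) :
    (μ (Iic x)).toReal = q := by
  have hIio : μ (Iio x) = μ (Iic x) :=
    measure_congr (Iio_ae_eq_Iic' (measure_singleton_eq_zero_of_continuous μ hcont x))
  have hIci : (μ (Ici x)).toReal = 1 - (μ (Iic x)).toReal := by
    rw [← compl_Iio, ← hIio, ← measureReal_def, ← measureReal_def,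
      probReal_compl_eq_one_sub measurableSet_Iio]
  linarith [h.1, h.2]

def pinball (q x τ : ℝ) : ℝ := max (x - τ) 0 - q * (x - τ)

lemma sub_mul_ite_lt_eq_max (a b : ℝ) : (a - b) * (if b < a then 1 else 0) = max (a - b) 0 := by
  split_ifs with h
  · rw [mul_one, max_eq_left (sub_nonneg.2 h.le)]
  · rw [mul_zero, max_eq_right (sub_nonpos.2 (not_lt.1 h))]

lemma Sint_eq_pinball {α : ℝ} (hα : α ≠ 0) (ℓ u τ : ℝ) :
    Sint α ℓ u τ = 2 / α * (pinball (α / 2) ℓ τ + pinball (1 - α / 2) u τ) := by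
  have hu := max_zero_sub_eq_self (τ - u)
  rw [neg_sub] at hu
  unfold Sint pinball
  rw [mul_assoc, sub_mul_ite_lt_eq_max, mul_assoc, sub_mul_ite_lt_eq_max]
  field_simp
  linear_combination 2 * hu

lemma integrable_pinball {μ : Measure ℝ} [IsFiniteMeasure μ] (hμ : Integrable id μ) (q x : ℝ) :
    Integrable (pinball q x) μ := by
  have hsub : Integrable (fun τ => x - τ) μ := (integrable_const x).sub hμ
  exact hsub.pos_part.sub (hsub.const_mul q)

lemma max_sub_sub_max_sub_eq_volume_real {a b : ℝ} (hab : a ≤ b) (τ : ℝ) :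
    max (b - τ) 0 - max (a - τ) 0 = volume.real (Ici τ ∩ Ioc a b) := by
  rw [← measureReal_congr ((Ioi_ae_eq_Ici (μ := volume) (a := τ)).inter (ae_eq_refl (Ioc a b))),
    inter_comm, Ioc_inter_Ioi, Real.volume_real_Ioc]
  rcases le_total τ a with h | h
  · rw [max_eq_left h, max_eq_left (by linarith), max_eq_left (by linarith),
      max_eq_left (by linarith)]
    ring
  · simp only [max_eq_right h, max_eq_right (sub_nonpos.2 h)]
    ring

lemma integral_max_sub_sub_max_sub_of_le (μ : Measure ℝ) [IsFiniteMeasure μ]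
    {a b : ℝ} (hab : a ≤ b) :
    ∫ τ, (max (b - τ) 0 - max (a - τ) 0) ∂μ = ∫ t in a..b, (μ (Iic t)).toReal := by
  set f : ℝ → ℝ → ℝ := fun τ t => (Ici τ).indicator 1 t
  have hf : Integrable (Function.uncurry f) (μ.prod (volume.restrict (Ioc a b))) := by
    have : Function.uncurry f = {p : ℝ × ℝ | p.1 ≤ p.2}.indicator 1 := by
      ext ⟨τ, t⟩; simp [f, indicator_apply]
    rw [this]
    exact (integrable_const 1).indicator (measurableSet_le measurable_fst measurable_snd)
  calc ∫ τ, (max (b - τ) 0 - max (a - τ) 0) ∂μ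
      = ∫ τ, (∫ t in Ioc a b, f τ t) ∂μ := by
        refine integral_congr_ae (Eventually.of_forall fun τ => ?_)
        dsimp only [f]
        rw [integral_indicator_one measurableSet_Ici, measureReal_restrict_apply measurableSet_Ici,
          max_sub_sub_max_sub_eq_volume_real hab]
    _ = ∫ t in Ioc a b, (∫ τ, f τ t ∂μ) := integral_integral_swap hf
    _ = ∫ t in a..b, (μ (Iic t)).toReal := by
        rw [intervalIntegral.integral_of_le hab]
        refine integral_congr_ae (Eventually.of_forall fun t => ?_)
        have : (fun τ => f τ t) = (Iic t).indicator 1 := by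
          ext τ; simp [f, indicator_apply]
        dsimp only
        rw [this, integral_indicator_one measurableSet_Iic, measureReal_def]

lemma integral_max_sub_sub_max_sub (μ : Measure ℝ) [IsFiniteMeasure μ] (a b : ℝ) :
    ∫ τ, (max (b - τ) 0 - max (a - τ) 0) ∂μ = ∫ t in a..b, (μ (Iic t)).toReal := by
  rcases le_total a b with hab | hba
  · exact integral_max_sub_sub_max_sub_of_le μ hab
  · rw [intervalIntegral.integral_symm, ← integral_max_sub_sub_max_sub_of_le μ hba,
      ← integral_neg]
    simp only [neg_sub]

lemma integral_pinball_sub_integral_pinball (μ : Measure ℝ) [IsProbabilityMeasure μ]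
    (hμ : Integrable id μ) (q a b : ℝ) :
    ∫ τ, pinball q b τ ∂μ - ∫ τ, pinball q a τ ∂μ = ∫ t in a..b, ((μ (Iic t)).toReal - q) := by
  have hmono : Monotone fun t : ℝ => (μ (Iic t)).toReal := fun s t hst =>
    ENNReal.toReal_mono (measure_ne_top μ _) (measure_mono (Iic_subset_Iic.2 hst))
  have hmax : Integrable (fun τ => max (b - τ) 0 - max (a - τ) 0) μ :=
    ((integrable_const b).sub hμ).pos_part.sub ((integrable_const a).sub hμ).pos_part
  have hdiff : ∀ τ, pinball q b τ - pinball q a τ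
      = (max (b - τ) 0 - max (a - τ) 0) - (b - a) * q := fun τ => by unfold pinball; ring
  rw [← integral_sub (integrable_pinball hμ q b) (integrable_pinball hμ q a),
    intervalIntegral.integral_sub hmono.intervalIntegrable intervalIntegrable_const,
    intervalIntegral.integral_const, smul_eq_mul, ← integral_max_sub_sub_max_sub μ a b]
  simp_rw [hdiff]
  rw [integral_sub hmax (integrable_const _), integral_const, probReal_univ, one_smul]

section UniqueQuantile

variable {μ : Measure ℝ} [IsProbabilityMeasure μ] {q c : ℝ}

lemma integral_pinball_lt_of_ne (hμ : Integrable id μ)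
    (hcont : Continuous fun t : ℝ => (μ (Iic t)).toReal)
    (hstrict : StrictMono fun t : ℝ => (μ (Iic t)).toReal)
    (hc : (μ (Iic c)).toReal = q) {x : ℝ} (hx : x ≠ c) :
    ∫ τ, pinball q c τ ∂μ < ∫ τ, pinball q x τ ∂μ := by
  have hint : ∀ a b, IntervalIntegrable (fun t => (μ (Iic t)).toReal - q) volume a b :=
    fun a b => (hcont.sub continuous_const).intervalIntegrable a b
  rw [← sub_pos, integral_pinball_sub_integral_pinball μ hμ]
  rcases hx.lt_or_gt with hxc | hcx
  · rw [intervalIntegral.integral_symm, ← intervalIntegral.integral_neg]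
    refine intervalIntegral.intervalIntegral_pos_of_pos_on (hint x c).neg (fun t ht => ?_) hxc
    linarith [hstrict ht.2]
  · refine intervalIntegral.intervalIntegral_pos_of_pos_on (hint c x) (fun t ht => ?_) hcx
    linarith [hstrict ht.1]

lemma integral_pinball_le (hμ : Integrable id μ)
    (hcont : Continuous fun t : ℝ => (μ (Iic t)).toReal)
    (hstrict : StrictMono fun t : ℝ => (μ (Iic t)).toReal)
    (hc : (μ (Iic c)).toReal = q) (x : ℝ) :
    ∫ τ, pinball q c τ ∂μ ≤ ∫ τ, pinball q x τ ∂μ := by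
  rcases eq_or_ne x c with rfl | hx
  · exact le_rfl
  · exact (integral_pinball_lt_of_ne hμ hcont hstrict hc hx).le

lemma integral_pinball_eq_iff (hμ : Integrable id μ)
    (hcont : Continuous fun t : ℝ => (μ (Iic t)).toReal)
    (hstrict : StrictMono fun t : ℝ => (μ (Iic t)).toReal)
    (hc : (μ (Iic c)).toReal = q) (x : ℝ) :
    ∫ τ, pinball q x τ ∂μ = ∫ τ, pinball q c τ ∂μ ↔ x = c := by
  refine ⟨fun h => ?_, fun h => h ▸ rfl⟩
  by_contra hx
  exact (integral_pinball_lt_of_ne hμ hcont hstrict hc hx).ne' h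

end UniqueQuantile

lemma integral_const_sub_sq (μ : Measure ℝ) [IsProbabilityMeasure μ] (hμ : MemLp id 2 μ)
    (c : ℝ) : ∫ τ, (c - τ) ^ 2 ∂μ = (c - ∫ t, t ∂μ) ^ 2 + Var[id; μ] := by
  have hsub : MemLp (fun τ => c - id τ) 2 μ := (memLp_const c).sub hμ
  rw [← variance_const_sub hμ.aestronglyMeasurable c, variance_eq_sub hsub]
  simp only [Pi.pow_apply, id]
  rw [integral_sub (f := fun _ => c) (g := fun τ => τ) (integrable_const c)
    (hμ.integrable one_le_two), integral_const, probReal_univ, one_smul]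
  ring

lemma integral_sq_add_Sint (μ : Measure ℝ) [IsProbabilityMeasure μ] (hμ : MemLp id 2 μ)
    {α : ℝ} (hα : α ≠ 0) (c ℓ u : ℝ) :
    ∫ τ, ((c - τ) ^ 2 + Sint α ℓ u τ) ∂μ = (c - ∫ t, t ∂μ) ^ 2 + Var[id; μ]
      + 2 / α * (∫ τ, pinball (α / 2) ℓ τ ∂μ + ∫ τ, pinball (1 - α / 2) u τ ∂μ) := by
  have hid : Integrable id μ := hμ.integrable one_le_two
  have hsq : Integrable (fun τ => (c - τ) ^ 2) μ := ((memLp_const c).sub hμ).integrable_sq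
  have hP : Integrable (fun τ => 2 / α * (pinball (α / 2) ℓ τ + pinball (1 - α / 2) u τ)) μ :=
    ((integrable_pinball hid _ ℓ).add (integrable_pinball hid _ u)).const_mul _
  simp_rw [Sint_eq_pinball hα]
  rw [integral_add hsq hP, integral_const_mul,
    integral_add (integrable_pinball hid _ ℓ) (integrable_pinball hid _ u),
    integral_const_sub_sq μ hμ c, add_assoc]

theorem stmt1_general (α : ℝ) (hα : α ∈ Ioo (0 : ℝ) 1)
    (G₀ G : Measure ℝ) [IsProbabilityMeasure G₀]
    (hG₀ : MemLp id 2 G₀)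
    (hcont : Continuous fun t : ℝ => (G₀ (Iic t)).toReal)
    (hstrict : StrictMono fun t : ℝ => (G₀ (Iic t)).toReal)
    (ℓ u ℓ₀ u₀ : ℝ)
    (hℓ₀ : IsQuantile G₀ (α / 2) ℓ₀) (hu₀ : IsQuantile G₀ (1 - α / 2) u₀) :
    (∫ τ, (((∫ t, t ∂G) - τ) ^ 2 + Sint α ℓ u τ) ∂G₀)
        = (∫ τ, (((∫ t, t ∂G₀) - τ) ^ 2 + Sint α ℓ₀ u₀ τ) ∂G₀)
      ↔ ((∫ t, t ∂G) = (∫ t, t ∂G₀) ∧ ℓ = ℓ₀ ∧ u = u₀) := by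
  have hid : Integrable id G₀ := hG₀.integrable one_le_two
  have hFℓ₀ := hℓ₀.toReal_measure_Iic_eq hcont
  have hFu₀ := hu₀.toReal_measure_Iic_eq hcont
  have hℓ := integral_pinball_le hid hcont hstrict hFℓ₀ ℓ
  have hu := integral_pinball_le hid hcont hstrict hFu₀ u
  have hk : 0 < 2 / α := div_pos two_pos hα.1
  rw [integral_sq_add_Sint G₀ hG₀ hα.1.ne', integral_sq_add_Sint G₀ hG₀ hα.1.ne', sub_self,
    ← sub_eq_zero (a := ∫ t, t ∂G), ← integral_pinball_eq_iff hid hcont hstrict hFℓ₀,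
    ← integral_pinball_eq_iff hid hcont hstrict hFu₀]
  constructor
  · intro h
    refine ⟨pow_eq_zero_iff two_ne_zero |>.1 ?_, ?_, ?_⟩ <;>
      nlinarith [sq_nonneg ((∫ t, t ∂G) - ∫ t, t ∂G₀), mul_le_mul_of_nonneg_left hℓ hk.le,
        mul_le_mul_of_nonneg_left hu hk.le]
  · rintro ⟨h₁, h₂, h₃⟩
    rw [h₁, h₂, h₃]

/-- Equality of the expected combined score holds if and only if the reported mean and
central quantiles agree with those of the true distribution `G₀` (whose CDF is assumed
continuous and strictly increasing, so quantiles are unique). -/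
theorem stmt1 (α : ℝ) (hα : α ∈ Ioo (0 : ℝ) 1)
    (G₀ G : Measure ℝ) [IsProbabilityMeasure G₀] [IsProbabilityMeasure G]
    (hG₀ : MemLp id 2 G₀) (hG : MemLp id 2 G)
    (hcont : Continuous fun t : ℝ => (G₀ (Iic t)).toReal)
    (hstrict : StrictMono fun t : ℝ => (G₀ (Iic t)).toReal)
    (ℓ u ℓ₀ u₀ : ℝ)
    (hℓ : IsQuantile G (α / 2) ℓ) (hu : IsQuantile G (1 - α / 2) u)
    (hℓ₀ : IsQuantile G₀ (α / 2) ℓ₀) (hu₀ : IsQuantile G₀ (1 - α / 2) u₀) :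
    (∫ τ, (((∫ t, t ∂G) - τ) ^ 2 + Sint α ℓ u τ) ∂G₀)
        = (∫ τ, (((∫ t, t ∂G₀) - τ) ^ 2 + Sint α ℓ₀ u₀ τ) ∂G₀)
      ↔ ((∫ t, t ∂G) = (∫ t, t ∂G₀) ∧ ℓ = ℓ₀ ∧ u = u₀) :=
  stmt1_general α hα G₀ G hG₀ hcont hstrict ℓ u ℓ₀ u₀ hℓ₀ hu₀
end

section
/- Let τ ∈ ℝ, s > 0, a > 0, α ∈ (0,1), and let W be a Gaussian random variable with mean τ and variance s². Then the expected interval score of the interval [W − a, W + a] at τ satisfies E[S_int(W − a, W + a; τ)] = 2a + (4s/α)·(φ(a/s) − (a/s)·Φ̄(a/s)). -/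
/-!
Pointwise, `Sint α (w - a) (w + a) τ = 2a + (2/α) ((w - τ - a)⁺ + (τ - w - a)⁺)`. Writing
`w - τ = s z` with `z` standard normal, each tail term has expectation
`E (s z - a)⁺ = s (φ(c) - c Φ̄(c))` with `c = a / s`: on `z > c` integrate
`z φ(z) = (-φ)'(z)` and `φ`. The two tails contribute equally since `N(0, s²)` is symmetric.
-/

open MeasureTheory ProbabilityTheory Set

/-- The standard normal density `φ(t) = (2π)^{-1/2} exp(-t²/2)`. -/
noncomputable def phi (t : ℝ) : ℝ := (Real.sqrt (2 * Real.pi))⁻¹ * Real.exp (-t ^ 2 / 2)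

/-- The standard normal cumulative distribution function `Φ`. -/
noncomputable def Phi (t : ℝ) : ℝ := ((gaussianReal 0 1) (Iic t)).toReal

open Filter Topology
open scoped NNReal

lemma Sint_eq_max (α ℓ u τ : ℝ) :
    Sint α ℓ u τ = (u - ℓ) + 2 / α * (max (ℓ - τ) 0 + max (τ - u) 0) := by
  unfold Sint
  rw [max_def, max_def]
  split_ifs <;> first | (exfalso; linarith) | ring

lemma Sint_sub_add (α a x τ : ℝ) :
    Sint α (x + τ - a) (x + τ + a) τ = 2 * a + 2 / α * (max (x - a) 0 + max (-x - a) 0) := by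
  rw [Sint_eq_max]
  ring_nf

lemma gaussianPDFReal_zero_one : gaussianPDFReal 0 1 = phi := by
  ext x
  simp [gaussianPDFReal, phi]

lemma hasDerivAt_phi (x : ℝ) : HasDerivAt phi (-x * phi x) x := by
  have h : HasDerivAt (fun t : ℝ => -t ^ 2 / 2) (-x) x :=
    ((hasDerivAt_pow 2 x).neg.div_const 2).congr_deriv (by push_cast; ring)
  exact (h.exp.const_mul _).congr_deriv (by unfold phi; ring)

lemma tendsto_phi_atTop : Tendsto phi atTop (𝓝 0) := by
  have h : Tendsto (fun x : ℝ => -x ^ 2 / 2) atTop atBot :=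
    (tendsto_neg_atBot_iff.mpr (tendsto_pow_atTop two_ne_zero)).atBot_div_const two_pos
  have h' := (Real.tendsto_exp_atBot.comp h).const_mul (Real.sqrt (2 * Real.pi))⁻¹
  rwa [mul_zero] at h'

lemma integrable_phi : Integrable phi := by
  rw [← gaussianPDFReal_zero_one]
  exact integrable_gaussianPDFReal 0 1

lemma integrable_mul_phi : Integrable fun x => x * phi x := by
  have h := (integrable_mul_exp_neg_mul_sq (b := 1 / 2) (by norm_num)).const_mul
    (Real.sqrt (2 * Real.pi))⁻¹
  convert h using 2 with x
  unfold phi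
  ring_nf

lemma integral_Ioi_mul_phi (c : ℝ) : ∫ x in Ioi c, x * phi x = phi c := by
  have h := integral_Ioi_of_hasDerivAt_of_tendsto (f := fun x => -phi x)
    (hasDerivAt_phi c).neg.continuousAt.continuousWithinAt
    (fun x _ => (hasDerivAt_phi x).neg.congr_deriv (by ring)) integrable_mul_phi.integrableOn
    (by simpa using tendsto_phi_atTop.neg)
  simpa using h

lemma integral_Ioi_phi (c : ℝ) : ∫ x in Ioi c, phi x = 1 - Phi c := by
  have hΦ : 1 - Phi c = (gaussianReal 0 1).real (Ioi c) := by
    rw [Phi, ← measureReal_def, ← compl_Iic, probReal_compl_eq_one_sub measurableSet_Iic]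
  rw [hΦ, measureReal_def, gaussianReal_apply_eq_integral 0 one_ne_zero,
    ENNReal.toReal_ofReal (integral_nonneg fun x => gaussianPDFReal_nonneg 0 1 x),
    gaussianPDFReal_zero_one]

lemma integral_max_sub_gaussianReal_zero_one (c : ℝ) :
    ∫ x, max (x - c) 0 ∂gaussianReal 0 1 = phi c - c * (1 - Phi c) := by
  have h : (fun x => phi x • max (x - c) 0)
      = (Ioi c).indicator (fun x => x * phi x - c * phi x) := by
    ext x
    by_cases hx : c < x
    · rw [indicator_of_mem (mem_Ioi.2 hx), max_eq_left (by linarith), smul_eq_mul]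
      ring
    · rw [indicator_of_notMem (by simpa using hx), max_eq_right (by linarith [not_lt.mp hx]),
        smul_zero]
  rw [integral_gaussianReal_eq_integral_smul one_ne_zero, gaussianPDFReal_zero_one, h,
    integral_indicator measurableSet_Ioi,
    integral_sub integrable_mul_phi.integrableOn (integrable_phi.const_mul c).integrableOn,
    integral_const_mul, integral_Ioi_mul_phi, integral_Ioi_phi]

lemma integral_max_sub_gaussianReal {s : ℝ} (hs : 0 < s) (a : ℝ) :
    ∫ x, max (x - a) 0 ∂gaussianReal 0 (s ^ 2).toNNReal
      = s * (phi (a / s) - a / s * (1 - Phi (a / s))) := by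
  have hmap : (gaussianReal 0 1).map (s * ·) = gaussianReal 0 (s ^ 2).toNNReal := by
    rw [gaussianReal_map_const_mul, mul_zero, mul_one]
    congr
    exact (max_eq_left (sq_nonneg s)).symm
  have hscale (x : ℝ) : max (s * x - a) 0 = s * max (x - a / s) 0 := by
    rw [mul_max_of_nonneg _ _ hs.le, mul_zero, mul_sub, mul_div_cancel₀ _ hs.ne']
  rw [← hmap, integral_map (measurable_const_mul s).aemeasurable (by fun_prop)]
  simp_rw [hscale]
  rw [integral_const_mul, integral_max_sub_gaussianReal_zero_one]

lemma integral_max_neg_sub_gaussianReal {s : ℝ} (hs : 0 < s) (a : ℝ) :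
    ∫ x, max (-x - a) 0 ∂gaussianReal 0 (s ^ 2).toNNReal
      = s * (phi (a / s) - a / s * (1 - Phi (a / s))) := by
  have hcont : Continuous fun x : ℝ => max (x - a) 0 := by fun_prop
  rw [← integral_max_sub_gaussianReal hs, ← integral_map measurable_neg.aemeasurable
    hcont.aestronglyMeasurable, gaussianReal_map_neg, neg_zero]

lemma integrable_max_sub_gaussianReal (μ : ℝ) (v : ℝ≥0) (a : ℝ) :
    Integrable (fun x => max (x - a) 0) (gaussianReal μ v) :=
  (((memLp_id_gaussianReal 1).integrable le_rfl).sub (integrable_const a)).pos_part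

lemma integrable_max_neg_sub_gaussianReal (μ : ℝ) (v : ℝ≥0) (a : ℝ) :
    Integrable (fun x => max (-x - a) 0) (gaussianReal μ v) :=
  (((memLp_id_gaussianReal 1).integrable le_rfl).neg.sub (integrable_const a)).pos_part

theorem stmt7_general (τ s a α : ℝ) (hs : 0 < s) :
    (∫ w, Sint α (w - a) (w + a) τ ∂(gaussianReal τ (Real.toNNReal (s ^ 2))))
      = 2 * a + (4 * s / α) * (phi (a / s) - (a / s) * (1 - Phi (a / s))) := by
  set v := (s ^ 2).toNNReal
  have hshift : gaussianReal τ v = (gaussianReal 0 v).map (MeasurableEquiv.addRight τ) := by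
    rw [MeasurableEquiv.coe_addRight, gaussianReal_map_add_const, zero_add]
  have hpos := integrable_max_sub_gaussianReal 0 v a
  have hneg := integrable_max_neg_sub_gaussianReal 0 v a
  rw [hshift, integral_map_equiv]
  simp_rw [MeasurableEquiv.coe_addRight, Sint_sub_add]
  rw [integral_add (integrable_const _) ((hpos.fun_add hneg).const_mul _), integral_const,
    integral_const_mul, integral_add hpos hneg, integral_max_sub_gaussianReal hs,
    integral_max_neg_sub_gaussianReal hs]
  simp only [probReal_univ, one_smul]
  ring

/-- For `W ~ N(τ, s²)`, the expected interval score of `[W − a, W + a]` at `τ` is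
`2a + (4s/α) (φ(a/s) − (a/s) Φ̄(a/s))`. -/
theorem stmt7 (τ s a α : ℝ) (hs : 0 < s) (ha : 0 < a) (hα : α ∈ Ioo (0 : ℝ) 1) :
    (∫ w, Sint α (w - a) (w + a) τ ∂(gaussianReal τ (Real.toNNReal (s ^ 2))))
      = 2 * a + (4 * s / α) * (phi (a / s) - (a / s) * (1 - Phi (a / s))) :=
  stmt7_general τ s a α hs
end
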